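/- Let T > 0 and let g_x, g_y, w_{xx}, w_{xy}, w_{yx}, w_{yy} : [0, T] → ℝ be continuous. Let λ_x, λ_y : [0, T] → ℝ be differentiable with λ_x(t) ≠ 0 for all t, satisfying the costate equations λ_x'(t) = −g_x(t) − (λ_x(t)·w_{xx}(t) + λ_y(t)·w_{yx}(t)) and λ_y'(t) = −g_y(t) − (λ_x(t)·w_{xy}(t) + λ_y(t)·w_{yy}(t)). Then q := λ_y / λ_x is differentiable on [0, T] and satisfies the Riccati equation q'(t) = −w_{xy}(t) + (w_{xx}(t) − w_{yy}(t))·q(t) + w_{yx}(t)·q(t)² + (1/λ_x(t))·(q(t)·g_x(t) − g_y(t)). -/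

import Mathlib

theorem hasDerivAt_costate_ratio {lamx lamy : ℝ → ℝ} {t gx gy wxx wxy wyx wyy : ℝ}
    (hne : lamx t ≠ 0)
    (hlamx : HasDerivAt lamx (-gx - (lamx t * wxx + lamy t * wyx)) t)
    (hlamy : HasDerivAt lamy (-gy - (lamx t * wxy + lamy t * wyy)) t) :
    HasDerivAt (fun s => lamy s / lamx s)
      (-wxy + (wxx - wyy) * (lamy t / lamx t) + wyx * (lamy t / lamx t) ^ 2 +
        (1 / lamx t) * ((lamy t / lamx t) * gx - gy)) t := by
  refine (hlamy.div hlamx hne).congr_deriv ?_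
  field_simp
  ring

theorem heading_tangent_riccati_general
    (T : ℝ)
    (gx gy wxx wxy wyx wyy : ℝ → ℝ)
    (lamx lamy : ℝ → ℝ)
    (hne : ∀ t ∈ Set.Icc (0 : ℝ) T, lamx t ≠ 0)
    (hlamx : ∀ t ∈ Set.Icc (0 : ℝ) T,
      HasDerivAt lamx (-gx t - (lamx t * wxx t + lamy t * wyx t)) t)
    (hlamy : ∀ t ∈ Set.Icc (0 : ℝ) T,
      HasDerivAt lamy (-gy t - (lamx t * wxy t + lamy t * wyy t)) t) :
    ∀ t ∈ Set.Icc (0 : ℝ) T,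
      HasDerivAt (fun s => lamy s / lamx s)
        (-wxy t + (wxx t - wyy t) * (lamy t / lamx t) +
          wyx t * (lamy t / lamx t) ^ 2 +
          (1 / lamx t) * ((lamy t / lamx t) * gx t - gy t)) t :=
  fun t ht => hasDerivAt_costate_ratio (hne t ht) (hlamx t ht) (hlamy t ht)

/-- Riccati equation for the tangent of the optimal heading: if the costates satisfy
`λ_x' = −g_x − (λ_x w_xx + λ_y w_yx)` and `λ_y' = −g_y − (λ_x w_xy + λ_y w_yy)` with
`λ_x ≠ 0`, then `q = λ_y / λ_x` satisfies
`q' = −w_xy + (w_xx − w_yy) q + w_yx q² + (q g_x − g_y)/λ_x`. -/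
theorem heading_tangent_riccati
    (T : ℝ) (hT : 0 < T)
    (gx gy wxx wxy wyx wyy : ℝ → ℝ)
    (hgx : ContinuousOn gx (Set.Icc 0 T)) (hgy : ContinuousOn gy (Set.Icc 0 T))
    (hwxx : ContinuousOn wxx (Set.Icc 0 T)) (hwxy : ContinuousOn wxy (Set.Icc 0 T))
    (hwyx : ContinuousOn wyx (Set.Icc 0 T)) (hwyy : ContinuousOn wyy (Set.Icc 0 T))
    (lamx lamy : ℝ → ℝ)
    (hne : ∀ t ∈ Set.Icc (0 : ℝ) T, lamx t ≠ 0)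
    (hlamx : ∀ t ∈ Set.Icc (0 : ℝ) T,
      HasDerivAt lamx (-gx t - (lamx t * wxx t + lamy t * wyx t)) t)
    (hlamy : ∀ t ∈ Set.Icc (0 : ℝ) T,
      HasDerivAt lamy (-gy t - (lamx t * wxy t + lamy t * wyy t)) t) :
    ∀ t ∈ Set.Icc (0 : ℝ) T,
      HasDerivAt (fun s => lamy s / lamx s)
        (-wxy t + (wxx t - wyy t) * (lamy t / lamx t) +
          wyx t * (lamy t / lamx t) ^ 2 +
          (1 / lamx t) * ((lamy t / lamx t) * gx t - gy t)) t :=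
  heading_tangent_riccati_general T gx gy wxx wxy wyx wyy lamx lamy hne hlamx hlamy
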